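/- Fourier representation of the Fresnel diffraction integral: let k > 0 and z > 0 be real, and let u : ℝ² → ℂ be integrable with integrable Fourier transform 𝓕u. Then for every (X,Y) ∈ ℝ², ∫∫_{ℝ²} (−ik e^{ikz}/(2πz)) exp(ik((X−x)² + (Y−y)²)/(2z)) u(x,y) dx dy = ∫∫_{ℝ²} e^{ikz} exp(−i(2π²z/k)(ξ² + η²)) 𝓕u(ξ,η) e^{2πi(Xξ + Yη)} dξ dη, where both integrals converge absolutely. -/

import Mathlib

/-!
Replace the chirp `exp(-i c |ξ|²)`, `c = 2π²z/k`, by the Gaussian `exp(-b |ξ|²)` with `Re b > 0`.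
The double integral defining the angular-spectrum side then converges absolutely, so Fubini and
the Fourier transform of the Gaussian turn it into the convolution of `u` with
`(π/b) exp(-π² |x|²/b)`. Every exponential involved has modulus at most `1` on the closed
half-plane `Re b ≥ 0`, so by dominated convergence both sides are continuous in `b` there
(away from `b = 0`), and the identity extends to `b = i c`, where the Gaussian is the Fresnel
kernel.
-/

open MeasureTheory Real

/-- The two-dimensional Fourier transform
`𝓕f(ξ,η) = ∫∫ f(x,y) e^{−2πi(xξ+yη)} dx dy`. -/
noncomputable def fourier2 (f : ℝ × ℝ → ℂ) : ℝ × ℝ → ℂ :=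
  fun q => ∫ p : ℝ × ℝ, f p * Complex.exp (-2 * (π : ℂ) * Complex.I * (p.1 * q.1 + p.2 * q.2))

open Complex Filter Set

theorem norm_cexp_neg_mul_ofReal_le_one {w : ℂ} (hw : 0 ≤ w.re) {t : ℝ} (ht : 0 ≤ t) :
    ‖cexp (-w * t)‖ ≤ 1 := by
  rw [norm_exp, Real.exp_le_one_iff]
  simpa using mul_nonneg hw ht

theorem re_ofReal_div_nonneg {a : ℝ} (ha : 0 ≤ a) {w : ℂ} (hw : 0 ≤ w.re) : 0 ≤ (a / w).re := by
  rw [div_eq_mul_inv, re_ofReal_mul, inv_re]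
  exact mul_nonneg ha (div_nonneg hw (normSq_nonneg w))

theorem norm_cexp_two_pi_I_mul_add (a b c d : ℝ) : ‖cexp (2 * π * I * (a * b + c * d))‖ = 1 := by
  simp [norm_exp]

section Damping

variable {α : Type*} [MeasurableSpace α] {μ : Measure α} {φ : α → ℝ} {g : α → ℂ}

theorem MeasureTheory.Integrable.cexp_neg_mul_mul (hφ : AEStronglyMeasurable φ μ)
    (hφ_nonneg : ∀ x, 0 ≤ φ x) (hg : Integrable g μ) {w : ℂ} (hw : 0 ≤ w.re) :
    Integrable (fun x => cexp (-w * φ x) * g x) μ :=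
  hg.bdd_mul (by fun_prop)
    (Eventually.of_forall fun x => norm_cexp_neg_mul_ofReal_le_one hw (hφ_nonneg x))

theorem continuousOn_integral_cexp_neg_mul_mul (hφ : AEStronglyMeasurable φ μ)
    (hφ_nonneg : ∀ x, 0 ≤ φ x) (hg : Integrable g μ) :
    ContinuousOn (fun w : ℂ => ∫ x, cexp (-w * φ x) * g x ∂μ) {w | 0 ≤ w.re} := by
  refine continuousOn_of_dominated
    (fun w hw => (hg.cexp_neg_mul_mul hφ hφ_nonneg hw).aestronglyMeasurable)
    (fun w hw => Eventually.of_forall fun x => ?_) hg.norm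
    (Eventually.of_forall fun x => by fun_prop)
  rw [norm_mul]
  exact mul_le_of_le_one_left (norm_nonneg _) (norm_cexp_neg_mul_ofReal_le_one hw (hφ_nonneg x))

end Damping

theorem MeasureTheory.Integrable.mul_cexp_two_pi_I_mul_add {g : ℝ × ℝ → ℂ} (hg : Integrable g)
    (X Y : ℝ) : Integrable (fun q : ℝ × ℝ => g q * cexp (2 * π * I * (X * q.1 + Y * q.2))) :=
  hg.mul_bdd (Continuous.aestronglyMeasurable (by fun_prop))
    (Eventually.of_forall fun q => (norm_cexp_two_pi_I_mul_add X q.1 Y q.2).le)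

theorem integral_cexp_neg_mul_sq_mul_cexp {b : ℂ} (hb : 0 < b.re) (s : ℝ) :
    ∫ x : ℝ, cexp (-b * x ^ 2) * cexp (2 * π * I * (x * s)) =
      (π / b) ^ (1 / 2 : ℂ) * cexp (-(π ^ 2 / b) * s ^ 2) := by
  have hb0 : b ≠ 0 := by rintro rfl; simp at hb
  convert fourierIntegral_gaussian hb (2 * π * s) using 1
  · congr 1 with x
    rw [mul_comm]
    congr 2
    ring
  · congr 2
    field_simp
    ring

theorem integral_prod_cexp_neg_mul_sq_mul_cexp {b : ℂ} (hb : 0 < b.re) (s t : ℝ) :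
    ∫ q : ℝ × ℝ, cexp (-b * (q.1 ^ 2 + q.2 ^ 2)) * cexp (2 * π * I * (q.1 * s + q.2 * t)) =
      π / b * cexp (-(π ^ 2 / b) * (s ^ 2 + t ^ 2)) := by
  have hπb : (π : ℂ) / b ≠ 0 :=
    div_ne_zero (ofReal_ne_zero.mpr pi_ne_zero) (by rintro rfl; simp at hb)
  have hsplit : ∀ q : ℝ × ℝ,
      cexp (-b * (q.1 ^ 2 + q.2 ^ 2)) * cexp (2 * π * I * (q.1 * s + q.2 * t)) =
        (cexp (-b * q.1 ^ 2) * cexp (2 * π * I * (q.1 * s))) *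
          (cexp (-b * q.2 ^ 2) * cexp (2 * π * I * (q.2 * t))) := by
    intro q
    simp only [← Complex.exp_add]
    ring_nf
  simp_rw [hsplit]
  rw [Measure.volume_eq_prod,
    integral_prod_mul (fun x : ℝ => cexp (-b * x ^ 2) * cexp (2 * π * I * (x * s)))
      (fun y : ℝ => cexp (-b * y ^ 2) * cexp (2 * π * I * (y * t))),
    integral_cexp_neg_mul_sq_mul_cexp hb, integral_cexp_neg_mul_sq_mul_cexp hb,
    mul_mul_mul_comm, ← cpow_add _ _ hπb, add_halves, cpow_one, ← Complex.exp_add, ← mul_add]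

theorem integrable_prod_cexp_neg_mul_sq {b : ℂ} (hb : 0 < b.re) :
    Integrable (fun q : ℝ × ℝ => cexp (-b * (q.1 ^ 2 + q.2 ^ 2))) := by
  have h := (integrable_cexp_neg_mul_sq hb).mul_prod (integrable_cexp_neg_mul_sq hb)
  refine h.congr (Eventually.of_forall fun q => ?_)
  simp only [← Complex.exp_add]
  ring_nf

theorem integral_cexp_neg_mul_sq_mul_fourier2_of_re_pos {u : ℝ × ℝ → ℂ} (hu : Integrable u)
    {b : ℂ} (hb : 0 < b.re) (X Y : ℝ) :
    ∫ q : ℝ × ℝ, cexp (-b * (q.1 ^ 2 + q.2 ^ 2)) *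
        (fourier2 u q * cexp (2 * π * I * (X * q.1 + Y * q.2))) =
      π / b * ∫ p : ℝ × ℝ, cexp (-(π ^ 2 / b) * ((X - p.1) ^ 2 + (Y - p.2) ^ 2)) * u p := by
  set F : ℝ × ℝ → ℝ × ℝ → ℂ := fun q p => cexp (-b * (q.1 ^ 2 + q.2 ^ 2)) *
    cexp (2 * π * I * (q.1 * (X - p.1) + q.2 * (Y - p.2))) * u p with hF
  have hF_int : Integrable (Function.uncurry F) ((volume : Measure (ℝ × ℝ)).prod volume) := by
    refine Integrable.mono' ((integrable_prod_cexp_neg_mul_sq hb).norm.mul_prod hu.norm) ?_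
      (Eventually.of_forall fun w => ?_)
    · exact (Continuous.aestronglyMeasurable (by fun_prop)).mul
        (hu.aestronglyMeasurable.comp_quasiMeasurePreserving Measure.quasiMeasurePreserving_snd)
    · simp only [Function.uncurry, hF, norm_mul]
      rw [← ofReal_sub, ← ofReal_sub, norm_cexp_two_pi_I_mul_add, mul_one]
  have h_inner : ∀ q, cexp (-b * (q.1 ^ 2 + q.2 ^ 2)) *
      (fourier2 u q * cexp (2 * π * I * (X * q.1 + Y * q.2))) = ∫ p, F q p := by
    intro q
    rw [fourier2, ← integral_mul_const, ← integral_const_mul]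
    congr with p
    simp only [hF]
    rw [mul_assoc (u p), ← Complex.exp_add]
    ring_nf
  have h_gauss : ∀ p, ∫ q, F q p =
      π / b * (cexp (-(π ^ 2 / b) * ((X - p.1) ^ 2 + (Y - p.2) ^ 2)) * u p) := by
    intro p
    simp only [hF]
    rw [integral_mul_const]
    have := integral_prod_cexp_neg_mul_sq_mul_cexp hb (X - p.1) (Y - p.2)
    push_cast at this
    rw [this]
    ring
  simp_rw [h_inner]
  rw [integral_integral_swap hF_int, ← integral_const_mul]
  exact integral_congr_ae (Eventually.of_forall h_gauss)

theorem integral_cexp_neg_mul_sq_mul_fourier2 {u : ℝ × ℝ → ℂ} (hu : Integrable u)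
    (hFu : Integrable (fourier2 u)) {b : ℂ} (hb : 0 ≤ b.re) (hb0 : b ≠ 0) (X Y : ℝ) :
    ∫ q : ℝ × ℝ, cexp (-b * (q.1 ^ 2 + q.2 ^ 2)) *
        (fourier2 u q * cexp (2 * π * I * (X * q.1 + Y * q.2))) =
      π / b * ∫ p : ℝ × ℝ, cexp (-(π ^ 2 / b) * ((X - p.1) ^ 2 + (Y - p.2) ^ 2)) * u p := by
  have hL := continuousOn_integral_cexp_neg_mul_mul (φ := fun q : ℝ × ℝ => q.1 ^ 2 + q.2 ^ 2)
    (by fun_prop) (fun q => by positivity) (hFu.mul_cexp_two_pi_I_mul_add X Y)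
  have hR := continuousOn_integral_cexp_neg_mul_mul
    (φ := fun p : ℝ × ℝ => (X - p.1) ^ 2 + (Y - p.2) ^ 2) (by fun_prop) (fun p => by positivity) hu
  push_cast at hL hR
  refine EqOn.of_subset_closure (s := {w : ℂ | 0 < w.re}) (t := {w | 0 ≤ w.re} ∩ {0}ᶜ)
    (fun w hw => integral_cexp_neg_mul_sq_mul_fourier2_of_re_pos hu hw X Y)
    (hL.mono inter_subset_left) ?_ ?_ ?_ (show b ∈ _ from ⟨hb, hb0⟩)
  · refine (continuousOn_const.div continuousOn_id fun w hw => hw.2).mul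
      (hR.comp (continuousOn_const.div continuousOn_id fun w hw => hw.2) fun w hw => ?_)
    simpa using re_ofReal_div_nonneg (sq_nonneg π) hw.1
  · exact fun w (hw : 0 < w.re) => ⟨hw.le, by rintro rfl; simp at hw⟩
  · rw [closure_setOfPred_lt_re]
    exact inter_subset_left

theorem fresnel_kernel_eq_gaussian {k z : ℝ} (hk : k ≠ 0) (hz : z ≠ 0) (r : ℂ) :
    -I * k / (2 * π * z) * cexp (I * k * r / (2 * z)) =
      π / (I * (2 * π ^ 2 * z / k : ℝ)) * cexp (-(π ^ 2 / (I * (2 * π ^ 2 * z / k : ℝ))) * r) := by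
  have hπ : (π : ℂ) ≠ 0 := ofReal_ne_zero.mpr pi_ne_zero
  have hk' : (k : ℂ) ≠ 0 := ofReal_ne_zero.mpr hk
  have hz' : (z : ℂ) ≠ 0 := ofReal_ne_zero.mpr hz
  push_cast
  congr 1
  · field_simp
    ring_nf
    simp [I_sq]
  · congr 1
    field_simp
    ring_nf
    simp [I_sq]

/-- Fourier representation of the Fresnel diffraction integral: for integrable `u` with
integrable Fourier transform, the Fresnel convolution integral equals the inverse Fourier
integral of `ĥ_F · 𝓕u`, both converging absolutely. -/
theorem fresnel_angular_spectrum_representation (k z : ℝ) (hk : 0 < k) (hz : 0 < z)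
    (u : ℝ × ℝ → ℂ) (hu : Integrable u) (hFu : Integrable (fourier2 u)) (X Y : ℝ) :
    Integrable (fun p : ℝ × ℝ =>
      -Complex.I * k * Complex.exp (Complex.I * k * z) / (2 * π * z) *
        Complex.exp (Complex.I * k * ((X - p.1) ^ 2 + (Y - p.2) ^ 2) / (2 * z)) * u p) ∧
    Integrable (fun q : ℝ × ℝ =>
      Complex.exp (Complex.I * k * z) *
        Complex.exp (-Complex.I * (2 * (π : ℂ) ^ 2 * z / k) * (q.1 ^ 2 + q.2 ^ 2)) *
        fourier2 u q * Complex.exp (2 * (π : ℂ) * Complex.I * (X * q.1 + Y * q.2))) ∧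
    (∫ p : ℝ × ℝ,
      -Complex.I * k * Complex.exp (Complex.I * k * z) / (2 * π * z) *
        Complex.exp (Complex.I * k * ((X - p.1) ^ 2 + (Y - p.2) ^ 2) / (2 * z)) * u p) =
    (∫ q : ℝ × ℝ,
      Complex.exp (Complex.I * k * z) *
        Complex.exp (-Complex.I * (2 * (π : ℂ) ^ 2 * z / k) * (q.1 ^ 2 + q.2 ^ 2)) *
        fourier2 u q * Complex.exp (2 * (π : ℂ) * Complex.I * (X * q.1 + Y * q.2))) := by
  set c : ℝ := 2 * π ^ 2 * z / k with hc
  have hc_pos : 0 < c := by positivity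
  have hb_re : 0 ≤ (I * c).re := by simp
  have h_fresnel : ∀ p : ℝ × ℝ,
      -I * k * cexp (I * k * z) / (2 * π * z) *
          cexp (I * k * ((X - p.1) ^ 2 + (Y - p.2) ^ 2) / (2 * z)) * u p =
        cexp (I * k * z) * (π / (I * c)) *
          (cexp (-(π ^ 2 / (I * c)) * ((X - p.1) ^ 2 + (Y - p.2) ^ 2)) * u p) := by
    intro p
    linear_combination (cexp (I * k * z) * u p) *
      fresnel_kernel_eq_gaussian hk.ne' hz.ne' ((X - p.1) ^ 2 + (Y - p.2) ^ 2)
  have h_spectrum : ∀ q : ℝ × ℝ,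
      cexp (I * k * z) * cexp (-I * (2 * (π : ℂ) ^ 2 * z / k) * (q.1 ^ 2 + q.2 ^ 2)) *
          fourier2 u q * cexp (2 * π * I * (X * q.1 + Y * q.2)) =
        cexp (I * k * z) * (cexp (-(I * c) * (q.1 ^ 2 + q.2 ^ 2)) *
          (fourier2 u q * cexp (2 * π * I * (X * q.1 + Y * q.2)))) := by
    intro q
    rw [hc]
    push_cast
    ring_nf
  simp_rw [h_fresnel, h_spectrum]
  refine ⟨?_, ?_, ?_⟩
  · have h := hu.cexp_neg_mul_mul (φ := fun p : ℝ × ℝ => (X - p.1) ^ 2 + (Y - p.2) ^ 2)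
      (by fun_prop) (fun p => by positivity) (w := π ^ 2 / (I * c))
      (by simpa using re_ofReal_div_nonneg (sq_nonneg π) hb_re)
    push_cast at h
    exact h.const_mul _
  · have h := (hFu.mul_cexp_two_pi_I_mul_add X Y).cexp_neg_mul_mul
      (φ := fun q : ℝ × ℝ => q.1 ^ 2 + q.2 ^ 2) (by fun_prop) (fun q => by positivity) hb_re
    push_cast at h
    exact h.const_mul _
  · rw [integral_const_mul, integral_const_mul,
      integral_cexp_neg_mul_sq_mul_fourier2 hu hFu hb_re (by simpa using hc_pos.ne') X Y, mul_assoc]
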